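/- Let s ∈ S and let ŝ : 𝒞 → 𝒞 be a lift of s consistent with chain structure (for instance any element of a chain semigroup lifting s). Then for every maximal chain C and every level 1 ≤ i ≤ h(X), the states of approximation satisfy (α_i(C^pos))·s ⊆ α_i((ŝ(C))^pos). -/

import Mathlib

/-!
`α_i(C)` is the least member of `C` whose successor in `C` (if any) has depth `< i`, and
`α_i(C)·s` is a member of `ŝ(C)`. If it were not contained in some `Q' ∈ ŝ(C)` eligible at
level `i`, then `Q' ⊊ α_i(C)·s`, so the successor `P'` of `Q'` in `ŝ(C)` satisfies
`P' ⊆ α_i(C)·s`, hence `P' ⊆_S α_i(C)`. Height is monotone under subduction, so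
`d(α_i(C)) ≤ d(P') < i`. But then the predecessor of `α_i(C)` in `C` (which exists, as
`α_i(C)` is not a singleton) is itself eligible, contradicting the minimality of `α_i(C)`.
-/

namespace Holonomy

variable {X : Type*}

/-- The extended image set `I = {X·s : s ∈ S} ∪ {X} ∪ {{x} : x ∈ X}`,
with the state set taken to be `Set.univ`. -/
def extImgs (S : Set (X → X)) : Set (Set X) :=
  {P : Set X | ∃ s ∈ S, P = s '' (Set.univ : Set X)} ∪ {(Set.univ : Set X)} ∪
    {P : Set X | ∃ x : X, P = {x}}

/-- `C` is a maximal chain (w.r.t. inclusion) inside the family `I`. -/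
def IsMaxChainIn (I : Set (Set X)) (C : Set (Set X)) : Prop :=
  C ⊆ I ∧ IsChain (· ⊆ ·) C ∧
    ∀ D : Set (Set X), D ⊆ I → IsChain (· ⊆ ·) D → C ⊆ D → D = C

/-- `𝒞`, the maximal chains in the extended image set. -/
def MaxChain (S : Set (X → X)) : Type _ :=
  {C : Set (Set X) // IsMaxChainIn (extImgs S) C}

/-- The action of `s` on a chain, `C·s = {P·s : P ∈ C}`. -/
def chainAct (C : Set (Set X)) (s : X → X) : Set (Set X) :=
  (fun P => s '' P) '' C

/-- Chains `C` and `D` agree down to `P`. -/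
def AgreeDownTo (C D : Set (Set X)) (P : Set X) : Prop :=
  P ∈ C ∧ P ∈ D ∧ ∀ Q : Set X, P ⊆ Q → (Q ∈ C ↔ Q ∈ D)

/-- `sh : 𝒞 → 𝒞` is a lift of `s`: `C·s ⊆ sh C` for every maximal chain `C`. -/
def IsLift (S : Set (X → X)) (s : X → X) (sh : MaxChain S → MaxChain S) : Prop :=
  ∀ C : MaxChain S, chainAct C.val s ⊆ (sh C).val

/-- `sh` is consistent with chain structure. -/
def Consistent (S : Set (X → X)) (s : X → X) (sh : MaxChain S → MaxChain S) : Prop :=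
  ∀ (C C' : MaxChain S) (P : Set X),
    AgreeDownTo C.val C'.val P → AgreeDownTo (sh C).val (sh C').val (s '' P)

/-- Product of a list of transformations, in left-to-right (right-action) order:
`prodList [a₁,…,a_k] = a₁⋯a_k`, i.e. `x ↦ a_k (⋯ (a₁ x))`. -/
def prodList {α : Type*} (l : List (α → α)) : α → α :=
  fun x => l.foldl (fun y f => f y) x

/-- Subduction: `P ⊆_S Q` iff `P ⊆ Q·s` for some `s ∈ S¹ = S ∪ {id}`. -/
def Subduction (S : Set (X → X)) (P Q : Set X) : Prop :=
  ∃ s ∈ insert (id : X → X) S, P ⊆ s '' Q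

/-- `P ≡_S Q`. -/
def SubEquiv (S : Set (X → X)) (P Q : Set X) : Prop :=
  Subduction S P Q ∧ Subduction S Q P

/-- Strict subduction `P ⊂_S Q`. -/
def SSubduction (S : Set (X → X)) (P Q : Set X) : Prop :=
  Subduction S P Q ∧ ¬ Subduction S Q P

/-- `P` is not a singleton. -/
def nonSingleton (P : Set X) : Prop := ¬ ∃ x : X, P = {x}

/-- The height of `Q`: the largest length of a strict subduction chain of
non-singleton members of `I` ending at `Q` (`0` for singletons, since then no
such chain exists). -/
noncomputable def height (S : Set (X → X)) (Q : Set X) : ℕ :=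
  sSup {n : ℕ | ∃ l : List (Set X), l.length = n ∧
    (∀ R ∈ l, R ∈ extImgs S ∧ nonSingleton R) ∧
    l.Chain' (SSubduction S) ∧ l.getLast? = some Q}

/-- Depth: `d(Q) = h(X) - h(Q) + 1`. -/
noncomputable def depth (S : Set (X → X)) (Q : Set X) : ℕ :=
  height S (Set.univ : Set X) - height S Q + 1

/-- The tiles of `P`: maximal elements (w.r.t. inclusion) of `{Q ∈ I : Q ⊊ P}`. -/
def tiles (S : Set (X → X)) (P : Set X) : Set (Set X) :=
  {Q | (Q ∈ extImgs S ∧ Q ⊂ P) ∧ ∀ R : Set X, R ∈ extImgs S → R ⊂ P → Q ⊆ R → Q = R}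

/-- The permutator group `G_P` of `P`, as a set of permutations of `P`. -/
def permutator (S : Set (X → X)) (P : Set X) : Set (Equiv.Perm ↥P) :=
  {σ | ∃ s ∈ S, s '' P = P ∧ ∀ p : ↥P, (σ p : X) = s (p : X)}

/-- The holonomy group `H_P` of `P`, as a set of permutations of `tiles P`. -/
def holonomyGroup (S : Set (X → X)) (P : Set X) : Set (Equiv.Perm ↥(tiles S P)) :=
  {σ | ∃ s ∈ S, s '' P = P ∧ ∀ T : ↥(tiles S P), ((σ T : Set X) : Set X) = s '' ((T : Set X) : Set X)}



/-- The state of approximation at level `i` of the positioned chain of a maximal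
chain `C`: `α_1 = X`, and for `i > 1`, `α_i` is the entry of the positioned chain
at the largest filled position `j < i`.  Since position `d(P)` of the positioned
chain of `C : X = P₁ ⊋ ⋯ ⊋ P_k` holds the successor of `P` for each non-minimal
member `P`, `α_i` is the smallest member of `C` whose immediate predecessor in
`C` has depth `< i`. -/
noncomputable def alpha (S : Set (X → X)) (C : Set (Set X)) (i : ℕ) : Set X :=
  if i ≤ 1 then Set.univ
  else ⋂₀ {Q | Q ∈ C ∧ ∀ P : Set X,
    (P ∈ C ∧ Q ⊂ P ∧ ∀ R ∈ C, Q ⊂ R → P ⊆ R) → depth S P < i}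

/-- The chosen equivalence-class representatives of depth `i`. -/
def RepsAt (S : Set (X → X)) (rep : Set X → Set X) (i : ℕ) : Set (Set X) :=
  {R | R ∈ extImgs S ∧ nonSingleton R ∧ rep R = R ∧ depth S R = i}

/-- States of the `i`-th holonomy component `ℋ_i`:
`none` is the extra state `*`, and `some (R, T)` is the tile `T` in the copy of
`tiles(R)` in the disjoint union, for `R` a representative of depth `i`. -/
def ValidAt (S : Set (X → X)) (rep : Set X → Set X) (i : ℕ)
    (t : Option (Set X × Set X)) : Prop :=
  t = none ∨ ∃ R T : Set X, t = some (R, T) ∧ R ∈ RepsAt S rep i ∧ T ∈ tiles S R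

/-- Transformations of the `i`-th holonomy component `ℋ_i` (on its state set):
either a constant map to a state of `ℋ_i`, or an element `(h₁,…,h_k)` of
`H_{R₁} × ⋯ × H_{R_k}` acting on the copy of `tiles(R_j)` by `h_j` (that is, by
`T ↦ T·s` for some `s` stabilizing `R_j`) and fixing `*`. -/
def IsHolTrans (S : Set (X → X)) (rep : Set X → Set X) (i : ℕ)
    (φ : Option (Set X × Set X) → Option (Set X × Set X)) : Prop :=
  (∃ t₀, ValidAt S rep i t₀ ∧ ∀ t, ValidAt S rep i t → φ t = t₀) ∨
  (φ none = none ∧ ∀ R ∈ RepsAt S rep i, ∃ s ∈ S, s '' R = R ∧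
    ∀ T ∈ tiles S R, φ (some (R, T)) = some (R, s '' T))

/-- `F` is an element of the wreath product `ℋ₁ ≀ ⋯ ≀ ℋ_d` of the holonomy
components: the action on each coordinate `i` depends only on the coordinates
above it (through a dependency function), and on every valid state this
component action is a transformation of `ℋ_i`. -/
def IsCascade (S : Set (X → X)) (rep : Set X → Set X) (d : ℕ)
    (F : (Fin d → Option (Set X × Set X)) → (Fin d → Option (Set X × Set X))) : Prop :=
  ∀ i : Fin d, ∃ g : (Fin d → Option (Set X × Set X)) →
      (Option (Set X × Set X) → Option (Set X × Set X)),
    (∀ t, F t i = g t (t i)) ∧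
    (∀ t t', (∀ j : Fin d, j < i → t j = t' j) → g t = g t') ∧
    (∀ t, (∀ j : Fin d, ValidAt S rep (j.val + 1) (t j)) →
      IsHolTrans S rep (i.val + 1) (g t))


section Order

variable {α : Type*} [PartialOrder α] {A : Set α}

lemma exists_isLeast_of_isChain (hA : IsChain (· ≤ ·) A) (hfin : A.Finite) (hne : A.Nonempty) :
    ∃ m, IsLeast A m := by
  obtain ⟨m, hm⟩ := hfin.exists_minimal hne
  exact ⟨m, hm.prop, fun a ha => (hA.total hm.prop ha).elim id (hm.le_of_le ha)⟩

lemma exists_isGreatest_of_isChain (hA : IsChain (· ≤ ·) A) (hfin : A.Finite)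
    (hne : A.Nonempty) : ∃ m, IsGreatest A m := by
  obtain ⟨m, hm⟩ := hfin.exists_maximal hne
  exact ⟨m, hm.prop, fun a ha => (hA.total ha hm.prop).elim id (hm.le_of_ge ha)⟩

end Order

section Subduction

variable {S : Set (X → X)} {P Q R : Set X}

lemma comp_mem_insert_id (hS : ∀ s ∈ S, ∀ t ∈ S, (fun x => t (s x)) ∈ S) {s t : X → X}
    (hs : s ∈ insert id S) (ht : t ∈ insert id S) : s ∘ t ∈ insert id S := by
  rcases hs with rfl | hs
  · exact ht
  rcases ht with rfl | ht
  · exact Or.inr hs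
  exact Or.inr (hS t ht s hs)

lemma Subduction.refl (P : Set X) : Subduction S P P :=
  ⟨id, Set.mem_insert _ _, by rw [Set.image_id]⟩

lemma Subduction.trans (hS : ∀ s ∈ S, ∀ t ∈ S, (fun x => t (s x)) ∈ S)
    (hPQ : Subduction S P Q) (hQR : Subduction S Q R) : Subduction S P R := by
  obtain ⟨s, hs, hP⟩ := hPQ
  obtain ⟨t, ht, hQ⟩ := hQR
  refine ⟨s ∘ t, comp_mem_insert_id hS hs ht, ?_⟩
  rw [Set.image_comp]
  exact hP.trans (Set.image_mono hQ)

lemma SSubduction.irrefl (P : Set X) : ¬ SSubduction S P P :=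
  fun h => h.2 (Subduction.refl P)

lemma SSubduction.trans_subduction (hS : ∀ s ∈ S, ∀ t ∈ S, (fun x => t (s x)) ∈ S)
    (hPQ : SSubduction S P Q) (hQR : Subduction S Q R) : SSubduction S P R :=
  ⟨hPQ.1.trans hS hQR, fun hRP => hPQ.2 (hQR.trans hS hRP)⟩

end Subduction

section Height

variable {S : Set (X → X)} {P Q A B : Set X}

def heightLengths (S : Set (X → X)) (Q : Set X) : Set ℕ :=
  {n | ∃ l : List (Set X), l.length = n ∧ (∀ R ∈ l, R ∈ extImgs S ∧ nonSingleton R) ∧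
    l.IsChain (SSubduction S) ∧ l.getLast? = some Q}

lemma bddAbove_heightLengths [Finite X] (hS : ∀ s ∈ S, ∀ t ∈ S, (fun x => t (s x)) ∈ S)
    (Q : Set X) : BddAbove (heightLengths S Q) := by
  have := Fintype.ofFinite (Set X)
  have : Trans (SSubduction S) (SSubduction S) (SSubduction S) :=
    ⟨fun h₁ h₂ => h₁.trans_subduction hS h₂.1⟩
  refine ⟨Fintype.card (Set X), ?_⟩
  rintro n ⟨l, rfl, -, hl, -⟩
  exact List.Nodup.length_le_card
    (hl.pairwise.imp fun {P Q} (h : SSubduction S P Q) (hPQ : P = Q) =>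
      SSubduction.irrefl Q (hPQ ▸ h))

/-- Replace the final `A` of the chain by `B` if `A ≡_S B`, and append `B` otherwise. -/
lemma exists_ge_mem_heightLengths (hS : ∀ s ∈ S, ∀ t ∈ S, (fun x => t (s x)) ∈ S)
    (hAB : Subduction S A B) (hB : B ∈ extImgs S) (hB' : nonSingleton B) {n : ℕ}
    (hn : n ∈ heightLengths S A) : ∃ m ∈ heightLengths S B, n ≤ m := by
  obtain ⟨l, rfl, hmem, hchain, hlast⟩ := hn
  obtain ⟨l, rfl⟩ := List.getLast?_eq_some_iff.mp hlast
  have hBmem : ∀ R ∈ [B], R ∈ extImgs S ∧ nonSingleton R := by simpa using ⟨hB, hB'⟩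
  by_cases hBA : Subduction S B A
  · refine ⟨_, ⟨l ++ [B], rfl, ?_, ?_, by simp⟩, by simp⟩
    · exact List.forall_mem_append.mpr ⟨fun R hR => hmem R (List.mem_append_left _ hR), hBmem⟩
    · obtain ⟨hl, -, hlA⟩ := List.isChain_append.mp hchain
      refine List.isChain_append.mpr ⟨hl, List.isChain_singleton _, ?_⟩
      simpa using fun x hx => (hlA x hx A rfl).trans_subduction hS hAB
  · refine ⟨_, ⟨l ++ [A] ++ [B], rfl, ?_, ?_, by simp⟩, by simp⟩
    · exact List.forall_mem_append.mpr ⟨hmem, hBmem⟩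
    · exact List.isChain_append.mpr
        ⟨hchain, List.isChain_singleton _, by simpa using ⟨hAB, hBA⟩⟩

lemma height_le_height_of_subduction [Finite X]
    (hS : ∀ s ∈ S, ∀ t ∈ S, (fun x => t (s x)) ∈ S)
    (hAB : Subduction S A B) (hB : B ∈ extImgs S) (hB' : nonSingleton B) :
    height S A ≤ height S B := by
  refine csSup_le' fun n hn => ?_
  obtain ⟨m, hm, hnm⟩ := exists_ge_mem_heightLengths hS hAB hB hB' hn
  exact hnm.trans (le_csSup (bddAbove_heightLengths hS B) hm)

lemma depth_le_depth_of_height_le (h : height S P ≤ height S Q) : depth S Q ≤ depth S P := by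
  unfold depth
  omega

end Height

section Chains

variable {S : Set (X → X)} {I C : Set (Set X)} {P Q R : Set X}

lemma univ_mem_extImgs : (Set.univ : Set X) ∈ extImgs S := Or.inl (Or.inr rfl)

lemma singleton_mem_extImgs (x : X) : ({x} : Set X) ∈ extImgs S := Or.inr ⟨x, rfl⟩

lemma nonempty_of_mem_extImgs [Nonempty X] (hP : P ∈ extImgs S) : P.Nonempty := by
  rcases hP with (⟨t, -, rfl⟩ | rfl) | ⟨x, rfl⟩
  · exact Set.univ_nonempty.image t
  · exact Set.univ_nonempty
  · exact Set.singleton_nonempty x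

lemma IsMaxChainIn.mem_of_isChain_insert (hC : IsMaxChainIn I C) (hP : P ∈ I)
    (hPC : IsChain (· ⊆ ·) (insert P C)) : P ∈ C :=
  hC.2.2 _ (Set.insert_subset hP hC.1) hPC (Set.subset_insert _ _) ▸ Set.mem_insert _ _

lemma IsMaxChainIn.univ_mem (hC : IsMaxChainIn (extImgs S) C) : Set.univ ∈ C :=
  hC.mem_of_isChain_insert univ_mem_extImgs
    (hC.2.1.insert fun R _ _ => Or.inr (Set.subset_univ R))

def CoversIn (C : Set (Set X)) (Q P : Set X) : Prop :=
  P ∈ C ∧ Q ⊂ P ∧ ∀ R ∈ C, Q ⊂ R → P ⊆ R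

lemma CoversIn.unique {P₁ P₂ : Set X} (h₁ : CoversIn C Q P₁) (h₂ : CoversIn C Q P₂) :
    P₁ = P₂ :=
  (h₁.2.2 _ h₂.1 h₂.2.1).antisymm (h₂.2.2 _ h₁.1 h₁.2.1)

lemma exists_coversIn [Finite X] (hC : IsChain (· ⊆ ·) C) (hR : R ∈ C) (hQR : Q ⊂ R) :
    ∃ P, CoversIn C Q P := by
  obtain ⟨P, ⟨hPC, hQP⟩, hleast⟩ := exists_isLeast_of_isChain
    (hC.mono fun _ h => h.1 : IsChain (· ⊆ ·) {R | R ∈ C ∧ Q ⊂ R}) (Set.toFinite _)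
    ⟨R, hR, hQR⟩
  exact ⟨P, hPC, hQP, fun R hR hQR => hleast ⟨hR, hQR⟩⟩

lemma IsMaxChainIn.exists_lt_of_nonSingleton (hC : IsMaxChainIn (extImgs S) C) (hQ : Q ∈ C)
    (hQne : Q.Nonempty) (hQ' : nonSingleton Q) : ∃ R ∈ C, R ⊂ Q := by
  by_contra! hmin
  obtain ⟨x, hx⟩ := hQne
  have hQR : ∀ R ∈ C, Q ⊆ R := fun R hR =>
    (hC.2.1.total hQ hR).elim id fun hRQ => (hRQ.eq_or_ssubset.resolve_right (hmin R hR)).ge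
  have hxC : {x} ∈ C := hC.mem_of_isChain_insert (singleton_mem_extImgs x)
    (hC.2.1.insert fun R hR _ => Or.inl ((Set.singleton_subset_iff.2 hx).trans (hQR R hR)))
  exact hQ' ⟨x, (hQR _ hxC).antisymm (Set.singleton_subset_iff.2 hx)⟩

lemma IsMaxChainIn.exists_coversIn_of_nonSingleton [Finite X]
    (hC : IsMaxChainIn (extImgs S) C) (hQ : Q ∈ C) (hQne : Q.Nonempty)
    (hQ' : nonSingleton Q) : ∃ Q₂ ∈ C, CoversIn C Q₂ Q := by
  obtain ⟨R, hR, hRQ⟩ := hC.exists_lt_of_nonSingleton hQ hQne hQ'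
  obtain ⟨Q₂, ⟨hQ₂C, hQ₂Q⟩, hgreatest⟩ := exists_isGreatest_of_isChain
    (hC.2.1.mono fun _ h => h.1 : IsChain (· ⊆ ·) {R | R ∈ C ∧ R ⊂ Q}) (Set.toFinite _)
    ⟨R, hR, hRQ⟩
  refine ⟨Q₂, hQ₂C, hQ, hQ₂Q, fun R hR hQ₂R => ?_⟩
  rcases hC.2.1.total hQ hR with hQR | hRQ
  · exact hQR
  rcases hRQ.eq_or_ssubset with rfl | hRQ
  · exact subset_rfl
  · exact absurd (hgreatest ⟨hR, hRQ⟩) hQ₂R.not_superset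

end Chains

section Approximation

variable {S : Set (X → X)} {C D : Set (Set X)} {i : ℕ}

def approxSet (S : Set (X → X)) (C : Set (Set X)) (i : ℕ) : Set (Set X) :=
  {Q | Q ∈ C ∧ ∀ P, CoversIn C Q P → depth S P < i}

lemma alpha_eq_sInter_approxSet (hi : 1 < i) : alpha S C i = ⋂₀ approxSet S C i :=
  if_neg hi.not_ge

lemma sInter_approxSet_mem [Finite X] (hC : IsMaxChainIn (extImgs S) C) :
    ⋂₀ approxSet S C i ∈ C := by
  obtain ⟨α, hα, hleast⟩ := exists_isLeast_of_isChain
    (hC.2.1.mono fun _ h => h.1 : IsChain (· ⊆ ·) (approxSet S C i)) (Set.toFinite _)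
    ⟨Set.univ, hC.univ_mem, fun P hP => absurd hP.2.1 (not_top_lt (a := P))⟩
  rw [(Set.sInter_subset_of_mem hα).antisymm (Set.subset_sInter hleast)]
  exact hα.1

lemma image_sInter_approxSet_subset [Finite X]
    (hS : ∀ s ∈ S, ∀ t ∈ S, (fun x => t (s x)) ∈ S) {s : X → X} (hs : s ∈ S)
    (hC : IsMaxChainIn (extImgs S) C) (hD : IsMaxChainIn (extImgs S) D) (hCD : chainAct C s ⊆ D) :
    s '' ⋂₀ approxSet S C i ⊆ ⋂₀ approxSet S D i := by
  set α := ⋂₀ approxSet S C i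
  have hαC : α ∈ C := sInter_approxSet_mem hC
  have hsαD : s '' α ∈ D := hCD ⟨α, hαC, rfl⟩
  refine Set.subset_sInter fun Q' ⟨hQ'D, hQ'succ⟩ => ?_
  rcases hD.2.1.total hsαD hQ'D with h | hQ'sα
  · exact h
  rcases hQ'sα.eq_or_ssubset with rfl | hQ'sα
  · exact subset_rfl
  exfalso
  obtain ⟨y, hy, -⟩ := Set.exists_of_ssubset hQ'sα
  have : Nonempty X := ⟨y⟩
  have hα : nonSingleton α := by
    rintro ⟨x, hx⟩
    rw [hx, Set.image_singleton, Set.ssubset_singleton_iff] at hQ'sα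
    exact (nonempty_of_mem_extImgs (hD.1 hQ'D)).ne_empty hQ'sα
  obtain ⟨P', hP'⟩ := exists_coversIn hD.2.1 hsαD hQ'sα
  have hdepth : depth S α < i := calc
    depth S α ≤ depth S P' := depth_le_depth_of_height_le <|
      height_le_height_of_subduction hS ⟨s, Or.inr hs, hP'.2.2 _ hsαD hQ'sα⟩ (hC.1 hαC) hα
    _ < i := hQ'succ P' hP'
  obtain ⟨Q₂, hQ₂C, hQ₂α⟩ :=
    hC.exists_coversIn_of_nonSingleton hαC (Set.image_nonempty.mp ⟨y, hy⟩) hα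
  have hQ₂ : Q₂ ∈ approxSet S C i := ⟨hQ₂C, fun P hP => hP.unique hQ₂α ▸ hdepth⟩
  exact hQ₂α.2.1.not_superset (Set.sInter_subset_of_mem hQ₂)

end Approximation

theorem alpha_act_subset_general {X : Type*} [Fintype X]
    (S : Set (X → X)) (hS : ∀ s ∈ S, ∀ t ∈ S, (fun x => t (s x)) ∈ S)
    (s : X → X) (hs : s ∈ S)
    (sh : MaxChain S → MaxChain S)
    (hlift : IsLift S s sh)
    (C : MaxChain S)
    (i : ℕ) :
    s '' alpha S C.val i ⊆ alpha S (sh C).val i := by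
  rcases le_or_gt i 1 with hi | hi
  · simp [alpha, hi]
  rw [alpha_eq_sInter_approxSet hi, alpha_eq_sInter_approxSet hi]
  exact image_sInter_approxSet_subset hS hs C.2 (sh C).2 (hlift C)

/-- the action of a consistent lift respects the states of
approximation: `(α_i(C^pos))·s ⊆ α_i((ŝ(C))^pos)`. -/
theorem alpha_act_subset {X : Type*} [Fintype X] [Nonempty X]
    (S : Set (X → X)) (hS : ∀ s ∈ S, ∀ t ∈ S, (fun x => t (s x)) ∈ S)
    (s : X → X) (hs : s ∈ S)
    (sh : MaxChain S → MaxChain S)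
    (hlift : IsLift S s sh) (hcons : Consistent S s sh)
    (C : MaxChain S)
    (i : ℕ) (hi1 : 1 ≤ i) (hi2 : i ≤ height S (Set.univ : Set X)) :
    s '' alpha S C.val i ⊆ alpha S (sh C).val i :=
  alpha_act_subset_general S hS s hs sh hlift C i

end Holonomy
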